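/- arXiv:2601.21237 — 2 statements merged into one kernel-verified Lean document; each statement's English description precedes it below -/
import Mathlib

section
/- For any collection 𝒞 and any noise level i ≥ 1: NC_1(𝒞) < ∞ if and only if NC_i(𝒞) < ∞. -/
open Set Classical

/-- The set of languages in `𝒞` consistent with sample `S` at noise level `i`. -/
def Consistent {U : Type*} (𝒞 : Set (Set U)) (S : Set U) (i : ℕ) : Set (Set U) :=
  {L | L ∈ 𝒞 ∧ (S \ L).encard ≤ (i : ℕ∞)}

/-- The noisy closure of `S` at noise level `i`. -/
noncomputable def NoisyClosure {U : Type*} (𝒞 : Set (Set U)) (S : Set U) (i : ℕ) : Set U :=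
  if (Consistent 𝒞 S i).Nonempty then ⋂ L ∈ Consistent 𝒞 S i, L else ∅

/-- The noisy closure dimension of `𝒞` at noise level `i`, as an extended natural. -/
noncomputable def NC {U : Type*} (𝒞 : Set (Set U)) (i : ℕ) : ℕ∞ :=
  ⨆ S ∈ {S : Set U | S.Finite ∧ (Consistent 𝒞 S i).Nonempty ∧
      (NoisyClosure 𝒞 S i).Finite}, S.encard

/-- `x` is an enumeration of `K` with noise level at most `i`. -/
def IsNoisyEnum {U : Type*} (K : Set U) (i : ℕ) (x : ℕ → U) : Prop :=
  Function.Injective x ∧ K ⊆ Set.range x ∧ (Set.range x \ K).encard ≤ (i : ℕ∞)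

/-- The set of strings revealed up to and including time `t`. -/
def seenSet {U : Type*} (x : ℕ → U) (t : ℕ) : Set U := x '' Set.Iic t

/-- The prefix `x₀, …, x_t` of the enumeration, as a list fed to the generator. -/
def prefixList {U : Type*} (x : ℕ → U) (t : ℕ) : List U := (List.range (t + 1)).map x

/-- `G` uniformly generates with noise level `i` for `𝒞`. -/
def UniformGen {U : Type*} (𝒞 : Set (Set U)) (i : ℕ) (G : List U → U) : Prop :=
  ∃ t0 : ℕ, ∀ K ∈ 𝒞, ∀ x : ℕ → U, IsNoisyEnum K i x →
    ∀ t ≥ t0, G (prefixList x t) ∈ K \ seenSet x t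

/-- `G` non-uniformly generates with noise level `i` for `𝒞`. -/
def NonUniformGen {U : Type*} (𝒞 : Set (Set U)) (i : ℕ) (G : List U → U) : Prop :=
  ∀ K ∈ 𝒞, ∃ t0 : ℕ, ∀ x : ℕ → U, IsNoisyEnum K i x →
    ∀ t ≥ t0, G (prefixList x t) ∈ K \ seenSet x t

/-- `G` uniformly noise-dependently generates for `𝒞`. -/
def UniformNoiseDepGen {U : Type*} (𝒞 : Set (Set U)) (G : List U → U) : Prop :=
  ∀ n : ℕ, ∃ t0 : ℕ, ∀ K ∈ 𝒞, ∀ x : ℕ → U, IsNoisyEnum K n x →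
    ∀ t ≥ t0, G (prefixList x t) ∈ K \ seenSet x t

/-- `G` non-uniformly noise-dependently generates for `𝒞`. -/
def NonUniformNoiseDepGen {U : Type*} (𝒞 : Set (Set U)) (G : List U → U) : Prop :=
  ∀ n : ℕ, ∀ K ∈ 𝒞, ∃ t0 : ℕ, ∀ x : ℕ → U, IsNoisyEnum K n x →
    ∀ t ≥ t0, G (prefixList x t) ∈ K \ seenSet x t

/-- The infinite "column" `B c` in the universe `ℕ × ℕ`. -/
def column (c : ℕ) : Set (ℕ × ℕ) := {p | p.1 = c}

/-- The collection of all nonempty unions of columns. -/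
def columnCollection : Set (Set (ℕ × ℕ)) :=
  {L | ∃ x : Set ℕ, x.Nonempty ∧ L = ⋃ c ∈ x, column c}


/-!
Raising the noise level only enlarges the set of consistent languages, so `NC` is monotone.
Conversely, if `NC 𝒞 m ≤ k` with `m ≥ 1`, a large witness `S` for `NC 𝒞 (m + 1)` contains
`k + 2` disjoint blocks of size `k + 1`. A language consistent with `S` loses at most `m + 1`
points of `S`, hence more than `m` points of at most one block; this lets the blocks be traded
for a witness for `NC 𝒞 m` of size `k + 2`, so `NC 𝒞 (m + 1) ≤ (k + 2) (k + 1)`.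
-/

lemma exists_injective_forall_mem_of_encard_le {ι α : Type*} [Finite ι] [Nonempty α]
    {S : Set α} (h : ENat.card ι ≤ S.encard) :
    ∃ f : ι → α, Function.Injective f ∧ ∀ a, f a ∈ S := by
  obtain ⟨f, hfS, hf⟩ := finite_univ.exists_injOn_of_encard_le (t := S) (by rwa [encard_univ])
  exact ⟨f, injOn_univ.mp hf, fun a => hfS (mem_univ a)⟩

lemma exists_injective_forall_mem_of_infinite {ι α : Type*} [Fintype ι] (Z : ι → Set α)
    (hZ : ∀ i, (Z i).Infinite) :
    ∃ f : ι → α, Function.Injective f ∧ ∀ i, f i ∈ Z i := by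
  choose t htZ htcard using fun i => (hZ i).exists_subset_card_eq (Fintype.card ι)
  obtain ⟨f, hf, hft⟩ := (Finset.all_card_le_biUnion_card_iff_exists_injective t).mp fun s => by
    rcases s.eq_empty_or_nonempty with rfl | ⟨i, hi⟩
    · simp
    calc s.card ≤ Fintype.card ι := s.card_le_univ
      _ = (t i).card := (htcard i).symm
      _ ≤ (s.biUnion t).card := Finset.card_le_card (Finset.subset_biUnion_of_mem t hi)
  exact ⟨f, hf, fun i => htZ i (hft i)⟩

lemma subset_of_encard_diff_le_of_lt {α : Type*} {S M A B : Set α} {n : ℕ}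
    (hM : (S \ M).encard ≤ ((n + 1 : ℕ) : ℕ∞)) (hA : A ⊆ S) (hB : B ⊆ S) (hAB : Disjoint A B)
    (hAM : (n : ℕ∞) < (A \ M).encard) : B ⊆ M := by
  have hsum : (A \ M).encard + (B \ M).encard ≤ n + 1 := by
    rw [← encard_union_eq (hAB.mono sdiff_subset sdiff_subset)]
    exact_mod_cast (encard_mono (union_subset (sdiff_subset_sdiff_left hA)
      (sdiff_subset_sdiff_left hB))).trans hM
  have hzero : (B \ M).encard = 0 := by
    have h : (n + 1 : ℕ∞) + (B \ M).encard ≤ n + 1 + 0 :=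
      (add_le_add_left (Order.add_one_le_of_lt hAM) _).trans (by rw [add_zero]; exact hsum)
    exact nonpos_iff_eq_zero.mp ((ENat.add_le_add_iff_left (by simp)).mp h)
  exact sdiff_eq_empty.mp (encard_eq_zero.mp hzero)

namespace NoisyClosureDimension

open Function

variable {U : Type*} {𝒞 : Set (Set U)}

lemma consistent_mono (𝒞 : Set (Set U)) (S : Set U) {a b : ℕ} (h : a ≤ b) :
    Consistent 𝒞 S a ⊆ Consistent 𝒞 S b := fun _ hL =>
  ⟨hL.1, hL.2.trans (by exact_mod_cast h)⟩

lemma noisyClosure_subset_of_mem_consistent {S L : Set U} {a : ℕ}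
    (hL : L ∈ Consistent 𝒞 S a) : NoisyClosure 𝒞 S a ⊆ L := by
  rw [NoisyClosure, if_pos ⟨L, hL⟩]
  exact biInter_subset_of_mem hL

lemma noisyClosure_subset_of_consistent_subset {S T : Set U} {a b : ℕ}
    (hS : (Consistent 𝒞 S b).Nonempty) (hST : Consistent 𝒞 S b ⊆ Consistent 𝒞 T a) :
    NoisyClosure 𝒞 T a ⊆ NoisyClosure 𝒞 S b := by
  rw [NoisyClosure.eq_1 𝒞 S b, if_pos hS]
  exact subset_iInter₂ fun _ hL => noisyClosure_subset_of_mem_consistent (hST hL)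

lemma encard_le_NC {T : Set U} {a : ℕ} (hT : T.Finite) (hne : (Consistent 𝒞 T a).Nonempty)
    (hcl : (NoisyClosure 𝒞 T a).Finite) : T.encard ≤ NC 𝒞 a :=
  le_iSup₂ (f := fun S (_ : S ∈ {S : Set U | S.Finite ∧ (Consistent 𝒞 S a).Nonempty ∧
    (NoisyClosure 𝒞 S a).Finite}) => S.encard) T ⟨hT, hne, hcl⟩

lemma NC_le {a : ℕ} {N : ℕ∞} (h : ∀ S : Set U, S.Finite → (Consistent 𝒞 S a).Nonempty →
    (NoisyClosure 𝒞 S a).Finite → S.encard ≤ N) : NC 𝒞 a ≤ N :=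
  iSup₂_le fun S ⟨hS, hne, hcl⟩ => h S hS hne hcl

lemma encard_le_NC_of_consistent_subset {S T : Set U} {a b : ℕ}
    (hne : (Consistent 𝒞 S b).Nonempty) (hcl : (NoisyClosure 𝒞 S b).Finite) (hT : T.Finite)
    (hST : Consistent 𝒞 S b ⊆ Consistent 𝒞 T a) : T.encard ≤ NC 𝒞 a :=
  encard_le_NC hT (hne.mono hST) (hcl.subset (noisyClosure_subset_of_consistent_subset hne hST))

lemma NC_mono (𝒞 : Set (Set U)) {a b : ℕ} (h : a ≤ b) : NC 𝒞 a ≤ NC 𝒞 b :=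
  NC_le fun S hS hne hcl =>
    encard_le_NC_of_consistent_subset hne hcl hS (consistent_mono 𝒞 S h)

/-- Each block must lose more than `m` points to some consistent language, or it would itself
witness `NC 𝒞 m > k`; that language contains every other block, so all blocks have infinite
level-`m` closures. Distinct points `x i` of these closures form a witness for `NC 𝒞 m`, since a
language consistent with `S` misses at most one of them. -/
lemma card_le_of_pairwise_disjoint_subsets {ι : Type*} [Fintype ι] {m k : ℕ} (hm : 1 ≤ m)
    (hk : NC 𝒞 m ≤ k) {S : Set U} (hS : S.Finite) (hne : (Consistent 𝒞 S (m + 1)).Nonempty)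
    (hcl : (NoisyClosure 𝒞 S (m + 1)).Finite) (C : ι → Set U) (hCS : ∀ i, C i ⊆ S)
    (hdisj : Pairwise (Disjoint on C)) (hC : ∀ i, (k : ℕ∞) < (C i).encard) :
    Fintype.card ι ≤ k + 1 := by
  by_contra! hι
  have : Nontrivial ι := Fintype.one_lt_card_iff_nontrivial.mp (by omega)
  have hCfin i : (C i).Finite := hS.subset (hCS i)
  have hspoiled i : ∃ M ∈ Consistent 𝒞 S (m + 1), (m : ℕ∞) < (C i \ M).encard := by
    by_contra! h
    exact (hC i).not_ge ((encard_le_NC_of_consistent_subset hne hcl (hCfin i)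
      fun M hM => ⟨hM.1, h M hM⟩).trans hk)
  have hothers {M} (hM : M ∈ Consistent 𝒞 S (m + 1)) {i} (hi : (m : ℕ∞) < (C i \ M).encard)
      {j} (hji : j ≠ i) : M ∈ Consistent 𝒞 (C j) m := by
    refine ⟨hM.1, ?_⟩
    rw [sdiff_eq_empty.mpr (subset_of_encard_diff_le_of_lt hM.2 (hCS i) (hCS j)
      (hdisj hji.symm) hi), encard_empty]
    exact zero_le
  have hinf i : (NoisyClosure 𝒞 (C i) m).Infinite := by
    intro hfin
    obtain ⟨j, hji⟩ := exists_ne i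
    obtain ⟨M, hM, hMj⟩ := hspoiled j
    exact (hC i).not_ge ((encard_le_NC (hCfin i) ⟨M, hothers hM hMj hji.symm⟩ hfin).trans hk)
  obtain ⟨x, hxinj, hx⟩ := exists_injective_forall_mem_of_infinite _ hinf
  have hsub : Consistent 𝒞 S (m + 1) ⊆ Consistent 𝒞 (range x) m := by
    intro M hM
    obtain ⟨i, hi⟩ : ∃ i, ∀ j ≠ i, M ∈ Consistent 𝒞 (C j) m := by
      by_cases h : ∃ i, (m : ℕ∞) < (C i \ M).encard
      · obtain ⟨i, hi⟩ := h
        exact ⟨i, fun j => hothers hM hi⟩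
      · push Not at h
        obtain ⟨i⟩ : Nonempty ι := inferInstance
        exact ⟨i, fun j _ => ⟨hM.1, h j⟩⟩
    have hmiss : range x \ M ⊆ {x i} := by
      rintro _ ⟨⟨j, rfl⟩, hjM⟩
      by_contra hji
      exact hjM (noisyClosure_subset_of_mem_consistent (hi j (by rintro rfl; exact hji rfl)) (hx j))
    refine ⟨hM.1, ?_⟩
    calc (range x \ M).encard ≤ ({x i} : Set U).encard := encard_mono hmiss
      _ = 1 := encard_singleton _
      _ ≤ m := by exact_mod_cast hm
  have hcard := hxinj.encard_range.trans
    ((encard_le_NC_of_consistent_subset hne hcl (finite_range x) hsub).trans hk)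
  rw [ENat.card_eq_coe_fintype_card, Nat.cast_le] at hcard
  omega

lemma NC_succ_le {m k : ℕ} (hm : 1 ≤ m) (hk : NC 𝒞 m ≤ k) :
    NC 𝒞 (m + 1) ≤ ((k + 2) * (k + 1) : ℕ) := by
  refine NC_le fun S hS hne hcl => ?_
  by_contra! hlt
  obtain ⟨u, -⟩ := encard_pos.mp (pos_of_gt hlt)
  have : Nonempty U := ⟨u⟩
  obtain ⟨f, hf, hfS⟩ := exists_injective_forall_mem_of_encard_le
    (ι := Fin (k + 2) × Fin (k + 1)) (S := S) (by simpa using hlt.le)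
  have hcard := card_le_of_pairwise_disjoint_subsets hm hk hS hne hcl
    (fun i => range fun j => f (i, j)) (fun i => range_subset_iff.mpr fun j => hfS (i, j))
    (fun i i' hii' => disjoint_left.mpr fun
      | _, ⟨j, rfl⟩, ⟨j', h⟩ => hii' (congrArg Prod.fst (hf h)).symm)
    (fun i => by
      have := (hf.comp (Prod.mk_right_injective i)).encard_range
      simp only [ENat.card_eq_coe_fintype_card, Fintype.card_fin] at this
      exact (ENat.natCast_lt_natCast.mpr k.lt_succ_self).trans_le this)
  simp at hcard

lemma NC_succ_lt_top {m : ℕ} (hm : 1 ≤ m) (h : NC 𝒞 m < ⊤) : NC 𝒞 (m + 1) < ⊤ := by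
  obtain ⟨k, hk⟩ := ENat.ne_top_iff_exists.mp h.ne
  exact (NC_succ_le hm hk.ge).trans_lt (ENat.natCast_lt_top _)

end NoisyClosureDimension

open NoisyClosureDimension in
theorem stmt5_general {U : Type*} (𝒞 : Set (Set U)) (i : ℕ) (hi : 1 ≤ i) :
    NC 𝒞 1 < ⊤ ↔ NC 𝒞 i < ⊤ := by
  refine ⟨fun h1 => ?_, fun hi' => (NC_mono 𝒞 hi).trans_lt hi'⟩
  induction i, hi using Nat.le_induction with
  | base => exact h1
  | succ m hm ih => exact NC_succ_lt_top hm ih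

theorem stmt5 {U : Type*} [Countable U] (𝒞 : Set (Set U)) (i : ℕ) (hi : 1 ≤ i) :
    NC 𝒞 1 < ⊤ ↔ NC 𝒞 i < ⊤ :=
  stmt5_general 𝒞 i hi
end

section
/- For any collection 𝒞 and finite noise level i ≥ 1, 𝒞 is uniformly generatable with noise level i if and only if 𝒞 is uniformly generatable with noise level 1. -/
open Set Classical

/-!
Noise `1 ≤ i` is harder than noise `1`, so one direction is immediate. Conversely, a uniform
generator at noise `1` with threshold `t0` forces `NC 𝒞 1 ≤ t0`: started on a consistent sample
`S` larger than `t0` and fed back its own outputs, each output is a new element of every language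
consistent with `S` (the list it was fed is a prefix of a noisy enumeration of that language), so
the noisy closure of `S` is infinite. Next `NC 𝒞 (n + 1) ≤ 2 * NC 𝒞 n + 1` for `1 ≤ n`, so
`NC 𝒞 i` is finite; once more than `NC 𝒞 i` points have been seen their noisy closure is
infinite, and outputting a fresh point of it generates uniformly at noise `i`.
-/

section NoisyClosure

variable {U : Type*} {𝒞 : Set (Set U)} {S T L : Set U} {i n : ℕ}

lemma consistent_anti (h : S ⊆ T) : Consistent 𝒞 T i ⊆ Consistent 𝒞 S i :=
  fun _ hL => ⟨hL.1, (encard_le_encard (sdiff_subset_sdiff_left h)).trans hL.2⟩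

lemma mem_noisyClosure_iff {z : U} :
    z ∈ NoisyClosure 𝒞 S i ↔ (Consistent 𝒞 S i).Nonempty ∧ ∀ L ∈ Consistent 𝒞 S i, z ∈ L := by
  unfold NoisyClosure
  split_ifs with h <;> simp [h]

lemma noisyClosure_subset (hL : L ∈ Consistent 𝒞 S i) : NoisyClosure 𝒞 S i ⊆ L :=
  fun _ hz => (mem_noisyClosure_iff.1 hz).2 L hL

lemma encard_le_NC (hS : S.Finite) (hcons : (Consistent 𝒞 S i).Nonempty)
    (hcl : (NoisyClosure 𝒞 S i).Finite) : S.encard ≤ NC 𝒞 i :=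
  le_biSup _ ⟨hS, hcons, hcl⟩

lemma NC_le {c : ℕ∞} (h : ∀ S : Set U, S.Finite → (Consistent 𝒞 S i).Nonempty →
    (NoisyClosure 𝒞 S i).Finite → S.encard ≤ c) : NC 𝒞 i ≤ c :=
  iSup₂_le fun S hS => h S hS.1 hS.2.1 hS.2.2

lemma exists_mem_consistent_diff_singleton (hS : S.Nonempty) (hL : L ∈ Consistent 𝒞 S (n + 1)) :
    ∃ u ∈ S, L ∈ Consistent 𝒞 (S \ {u}) n := by
  rcases (S \ L).eq_empty_or_nonempty with hSL | ⟨u, hu⟩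
  · obtain ⟨u, hu⟩ := hS
    refine ⟨u, hu, hL.1, ?_⟩
    rw [(subset_empty_iff.1 (hSL ▸ sdiff_subset_sdiff_left sdiff_subset) : (S \ {u}) \ L = ∅)]
    simp
  · refine ⟨u, hu.1, hL.1, ?_⟩
    have hsplit := encard_sdiff_singleton_add_one hu
    rw [show (S \ {u}) \ L = (S \ L) \ {u} from Set.sdiff_sdiff_comm]
    have := hsplit ▸ hL.2
    push_cast at this
    exact (ENat.add_le_add_iff_right ENat.one_ne_top).1 this

lemma encard_le_NC_of_consistent_subset {ι : Type*} {A : ι → Set U} {V : Set ι}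
    (hT : T.Finite) (hV : V.Nonempty) (hcons : ∀ u ∈ V, (Consistent 𝒞 (A u) n).Nonempty)
    (hfin : (⋂ u ∈ V, NoisyClosure 𝒞 (A u) n).Finite)
    (hsub : ∀ u ∈ V, Consistent 𝒞 (A u) n ⊆ Consistent 𝒞 T n) : T.encard ≤ NC 𝒞 n := by
  obtain ⟨u₀, hu₀⟩ := hV
  have hTcons : (Consistent 𝒞 T n).Nonempty := (hcons u₀ hu₀).mono (hsub u₀ hu₀)
  refine encard_le_NC hT hTcons (hfin.subset fun z hz => mem_iInter₂.2 fun u hu => ?_)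
  exact mem_noisyClosure_iff.2
    ⟨hcons u hu, fun L hL => (mem_noisyClosure_iff.1 hz).2 L (hsub u hu hL)⟩

/-- Minimality yields, for each `u ∈ V`, a point `w u` lying in every closure except that of `A u`;
the points `w u` then form a sample of size `|V|` that is consistent at level `1 ≤ n` with every
language consistent with some `A u`. -/
lemma encard_le_NC_of_minimal (hn : 1 ≤ n) {ι : Type*} {A : ι → Set U} {V : Set ι}
    (hV : V.Finite) (hcons : ∀ u ∈ V, (Consistent 𝒞 (A u) n).Nonempty)
    (hfin : (⋂ u ∈ V, NoisyClosure 𝒞 (A u) n).Finite)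
    (hmin : ∀ u ∈ V, (⋂ u' ∈ V \ {u}, NoisyClosure 𝒞 (A u') n).Infinite) :
    V.encard ≤ NC 𝒞 n := by
  rcases V.eq_empty_or_nonempty with rfl | hVne
  · simp
  have : Nonempty U := ⟨(hmin _ hVne.some_mem).nonempty.some⟩
  have hex : ∀ u ∈ V, ∃ z ∈ ⋂ u' ∈ V \ {u}, NoisyClosure 𝒞 (A u') n,
      z ∉ ⋂ u' ∈ V, NoisyClosure 𝒞 (A u') n := fun u hu =>
    ((hmin u hu).sdiff hfin).nonempty
  choose! w hw hw' using hex
  have hw_mem : ∀ u ∈ V, ∀ u' ∈ V, u' ≠ u → w u ∈ NoisyClosure 𝒞 (A u') n :=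
    fun u hu u' hu' hne => mem_iInter₂.1 (hw u hu) u' ⟨hu', hne⟩
  have hw_inj : InjOn w V := by
    intro u hu u' hu' heq
    by_contra hne
    refine hw' u hu (mem_iInter₂.2 fun v hv => ?_)
    rcases eq_or_ne v u with rfl | hvu
    · exact heq ▸ hw_mem u' hu' v hv hne
    · exact hw_mem u hu v hv hvu
  rw [← hw_inj.encard_image]
  refine encard_le_NC_of_consistent_subset (hV.image w) hVne hcons hfin fun u hu L hL => ⟨hL.1, ?_⟩
  have hsub : w '' V \ L ⊆ {w u} := by
    rintro _ ⟨⟨u', hu', rfl⟩, hzL⟩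
    by_contra hne
    exact hzL (noisyClosure_subset hL (hw_mem u' hu' u hu fun h => hne (h ▸ rfl)))
  calc (w '' V \ L).encard ≤ ({w u} : Set U).encard := encard_le_encard hsub
    _ = 1 := encard_singleton _
    _ ≤ n := by exact_mod_cast hn

/-- The languages consistent with `S` at level `n + 1` are covered by those consistent at level `n`
with some `S \ {u}`. A minimal `V ⊆ S` whose punctured samples still have a finite joint closure
splits `S` into `S \ V`, bounded through the joint closure, and `V`, bounded by minimality. -/
lemma NC_succ_le (hn : 1 ≤ n) : NC 𝒞 (n + 1) ≤ 2 * NC 𝒞 n + 1 := by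
  refine NC_le fun S hSfin hScons hScl => ?_
  rcases S.eq_empty_or_nonempty with rfl | hSne
  · simp
  set W : Set U := {u ∈ S | (Consistent 𝒞 (S \ {u}) n).Nonempty}
  have hcover : ∀ L ∈ Consistent 𝒞 S (n + 1), ∃ u ∈ W, L ∈ Consistent 𝒞 (S \ {u}) n := by
    intro L hL
    obtain ⟨u, hu, hLu⟩ := exists_mem_consistent_diff_singleton hSne hL
    exact ⟨u, ⟨hu, L, hLu⟩, hLu⟩
  set 𝒱 : Set (Set U) :=
    {V | V ⊆ W ∧ V.Nonempty ∧ (⋂ u ∈ V, NoisyClosure 𝒞 (S \ {u}) n).Finite}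
  have hW : W ∈ 𝒱 := by
    refine ⟨subset_rfl, ?_, hScl.subset fun z hz => mem_noisyClosure_iff.2 ⟨hScons, ?_⟩⟩
    · obtain ⟨L, hL⟩ := hScons
      obtain ⟨u, hu, -⟩ := hcover L hL
      exact ⟨u, hu⟩
    · intro L hL
      obtain ⟨u, hu, hLu⟩ := hcover L hL
      exact noisyClosure_subset hLu (mem_iInter₂.1 hz u hu)
  have h𝒱fin : 𝒱.Finite :=
    ((hSfin.subset (sep_subset _ _)).finite_subsets).subset fun V hV => hV.1
  obtain ⟨V, ⟨hVW, hVne, hVfin⟩, hVmin⟩ := h𝒱fin.exists_minimal ⟨W, hW⟩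
  have hVS : V ⊆ S := hVW.trans (sep_subset _ _)
  have hVcons : ∀ u ∈ V, (Consistent 𝒞 (S \ {u}) n).Nonempty := fun u hu => (hVW hu).2
  have hrest : (S \ V).encard ≤ NC 𝒞 n :=
    encard_le_NC_of_consistent_subset hSfin.sdiff hVne hVcons hVfin fun u hu =>
      consistent_anti (sdiff_subset_sdiff_right (singleton_subset_iff.2 hu))
  have hV : V.encard ≤ NC 𝒞 n + 1 := by
    rcases V.subsingleton_or_nontrivial with hsub | hnt
    · exact (encard_le_one_iff.2 fun a b ha hb => hsub ha hb).trans le_add_self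
    refine (encard_le_NC_of_minimal hn (hSfin.subset hVS) hVcons hVfin fun u hu => ?_).trans
      le_self_add
    intro hfin
    obtain ⟨v, hv, hvu⟩ := hnt.exists_ne u
    have hVu : V \ {u} ∈ 𝒱 := ⟨sdiff_subset.trans hVW, ⟨v, hv, hvu⟩, hfin⟩
    exact (hVmin hVu sdiff_subset hu).2 rfl
  calc S.encard = (S \ V).encard + V.encard := (encard_sdiff_add_encard_of_subset hVS).symm
    _ ≤ NC 𝒞 n + (NC 𝒞 n + 1) := add_le_add hrest hV
    _ = 2 * NC 𝒞 n + 1 := by ring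

end NoisyClosure

lemma NC_ne_top_of_NC_one_ne_top {U : Type*} {𝒞 : Set (Set U)} (h : NC 𝒞 1 ≠ ⊤) :
    ∀ n, 1 ≤ n → NC 𝒞 n ≠ ⊤ := by
  refine Nat.le_induction h fun n hn ih => ne_top_of_le_ne_top ?_ (NC_succ_le hn)
  lift NC 𝒞 n to ℕ using ih with k
  exact_mod_cast ENat.natCast_ne_top (2 * k + 1)

section Enumerations

variable {U : Type*} {𝒞 : Set (Set U)} {K L : Set U} {i : ℕ} {x : ℕ → U} {l : List U}

lemma setOf_mem_prefixList (x : ℕ → U) (t : ℕ) : {a | a ∈ prefixList x t} = seenSet x t := by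
  ext a
  simp [prefixList, seenSet, eq_comm]

lemma finite_seenSet (x : ℕ → U) (t : ℕ) : (seenSet x t).Finite :=
  (finite_Iic t).image x

lemma encard_seenSet (hx : Function.Injective x) (t : ℕ) : (seenSet x t).encard = t + 1 := by
  rw [seenSet, hx.injOn.encard_image, ← Finset.coe_Iic, encard_coe_eq_coe_finsetCard]
  simp

lemma IsNoisyEnum.mem_consistent_seenSet (hx : IsNoisyEnum K i x) (hK : K ∈ 𝒞) (t : ℕ) :
    K ∈ Consistent 𝒞 (seenSet x t) i :=
  ⟨hK, (encard_le_encard (sdiff_subset_sdiff_left (image_subset_range x _))).trans hx.2.2⟩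

lemma UniformGen.mono {G : List U → U} {j : ℕ} (hG : UniformGen 𝒞 i G) (hj : j ≤ i) :
    UniformGen 𝒞 j G := by
  obtain ⟨t0, hG⟩ := hG
  exact ⟨t0, fun K hK x hx => hG K hK x ⟨hx.1, hx.2.1, hx.2.2.trans (by exact_mod_cast hj)⟩⟩

lemma exists_uniformGen_of_NC_ne_top [Nonempty U] (h : NC 𝒞 i ≠ ⊤) :
    ∃ G : List U → U, UniformGen 𝒞 i G := by
  refine ⟨fun l => if h : (NoisyClosure 𝒞 {a | a ∈ l} i \ {a | a ∈ l}).Nonempty then h.some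
    else Classical.arbitrary U, (NC 𝒞 i).toNat, fun K hK x hx t ht => ?_⟩
  have hKcons := hx.mem_consistent_seenSet hK t
  have hinf : (NoisyClosure 𝒞 (seenSet x t) i).Infinite := fun hfin => by
    have hle := encard_le_NC (finite_seenSet x t) ⟨K, hKcons⟩ hfin
    rw [encard_seenSet hx.1, ← ENat.natCast_toNat h] at hle
    norm_cast at hle
    omega
  have hne := (hinf.sdiff (finite_seenSet x t)).nonempty
  simp only [setOf_mem_prefixList, dif_pos hne]
  exact ⟨noisyClosure_subset hKcons hne.some_mem.1, hne.some_mem.2⟩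

lemma exists_injective_extend_list [Countable U] (hl : l.Nodup) {A : Set U} (hA : A.Infinite) :
    ∃ x : ℕ → U, Function.Injective x ∧ range x = {a | a ∈ l} ∪ A ∧
      ∀ n (h : n < l.length), x n = l[n] := by
  have : Infinite ↥(A \ {a | a ∈ l}) := (hA.sdiff l.finite_toSet).to_subtype
  obtain ⟨e⟩ := nonempty_denumerable ↥(A \ {a | a ∈ l})
  let f : ℕ ≃ ↥(A \ {a | a ∈ l}) := e.eqv.symm
  refine ⟨fun n => if h : n < l.length then l[n] else f (n - l.length), ?_, ?_,
    fun n h => dif_pos h⟩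
  · intro a b hab
    dsimp only at hab
    split_ifs at hab with ha hb hb
    · exact (hl.getElem_inj_iff).1 hab
    · exact absurd (hab ▸ l.getElem_mem ha) (f _).2.2
    · exact absurd (hab ▸ l.getElem_mem hb) (f _).2.2
    · have := f.injective (Subtype.ext hab)
      omega
  · ext z
    constructor
    · rintro ⟨n, rfl⟩
      dsimp only
      split_ifs with h
      · exact Or.inl (l.getElem_mem h)
      · exact Or.inr (f _).2.1
    · rintro hz
      by_cases hzl : z ∈ l
      · obtain ⟨n, hn, rfl⟩ := List.getElem_of_mem hzl
        exact ⟨n, dif_pos hn⟩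
      · refine ⟨l.length + f.symm ⟨z, hz.resolve_left hzl, hzl⟩, ?_⟩
        simp

lemma prefixList_eq {t : ℕ} (hlen : l.length = t + 1) (hx : ∀ n (h : n < l.length), x n = l[n]) :
    prefixList x t = l := by
  refine List.ext_getElem (by simp [prefixList, hlen]) fun n h₁ h₂ => ?_
  simp [prefixList, hx n h₂]

lemma generate_mem_diff_of_nodup [Countable U] {G : List U → U} {t0 : ℕ}
    (hG : ∀ K ∈ 𝒞, ∀ x : ℕ → U, IsNoisyEnum K i x → ∀ t ≥ t0, G (prefixList x t) ∈ K \ seenSet x t)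
    (hL : L ∈ 𝒞) (hLinf : L.Infinite) (hl : l.Nodup) (hlen : t0 < l.length)
    (hnoise : ({a | a ∈ l} \ L).encard ≤ i) : G l ∈ L \ {a | a ∈ l} := by
  obtain ⟨x, hinj, hrange, hx⟩ := exists_injective_extend_list hl hLinf
  have hpre : prefixList x (l.length - 1) = l := prefixList_eq (by omega) hx
  have henum : IsNoisyEnum L i x :=
    ⟨hinj, hrange ▸ subset_union_right, by rwa [hrange, union_sdiff_right]⟩
  have := hG L hL x henum (l.length - 1) (by omega)
  rwa [← setOf_mem_prefixList, hpre] at this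

end Enumerations

def greedyRun {U : Type*} (G : List U → U) (l : List U) : ℕ → List U
  | 0 => l
  | j + 1 => greedyRun G l j ++ [G (greedyRun G l j)]

section GreedyRun

variable {U : Type*} {G : List U → U} {l : List U}

lemma length_greedyRun (j : ℕ) : (greedyRun G l j).length = l.length + j := by
  induction j with
  | zero => rfl
  | succ j ih => simp [greedyRun, ih, Nat.add_assoc]

lemma mem_greedyRun {j : ℕ} {a : U} :
    a ∈ greedyRun G l j ↔ a ∈ l ∨ ∃ k < j, G (greedyRun G l k) = a := by
  induction j with
  | zero => simp [greedyRun]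
  | succ j ih =>
    simp only [greedyRun, List.mem_append, ih, List.mem_singleton, Nat.lt_succ_iff_lt_or_eq]
    grind

lemma nodup_greedyRun (hl : l.Nodup) {j : ℕ}
    (h : ∀ k < j, G (greedyRun G l k) ∉ greedyRun G l k) : (greedyRun G l j).Nodup := by
  induction j with
  | zero => exact hl
  | succ j ih =>
    rw [greedyRun, List.nodup_append]
    refine ⟨ih fun k hk => h k (by omega), List.nodup_singleton _, ?_⟩
    rintro a ha b hb rfl
    exact h j (by omega) (List.mem_singleton.1 hb ▸ ha)

lemma injective_greedyRun_output (h : ∀ j, G (greedyRun G l j) ∉ greedyRun G l j) :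
    Function.Injective fun j => G (greedyRun G l j) := by
  intro a b hab
  by_contra hne
  rcases Nat.lt_or_gt_of_ne hne with hlt | hlt
  · exact h b (mem_greedyRun.2 (Or.inr ⟨a, hlt, hab⟩))
  · exact h a (mem_greedyRun.2 (Or.inr ⟨b, hlt, hab.symm⟩))

end GreedyRun

lemma NC_le_of_uniformGen {U : Type*} [Countable U] {𝒞 : Set (Set U)} {i t0 : ℕ}
    (h𝒞 : ∀ L ∈ 𝒞, L.Infinite) {G : List U → U}
    (hG : ∀ K ∈ 𝒞, ∀ x : ℕ → U, IsNoisyEnum K i x →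
      ∀ t ≥ t0, G (prefixList x t) ∈ K \ seenSet x t) :
    NC 𝒞 i ≤ t0 := by
  refine NC_le fun S hSfin hScons hScl => ?_
  by_contra! hlt
  set l := hSfin.toFinset.toList
  have hl : l.Nodup := Finset.nodup_toList _
  have hlS : {a | a ∈ l} = S := by ext; simp [l]
  have hlen : t0 < l.length := by
    rw [hSfin.encard_eq_coe_toFinset_card] at hlt
    simpa [l] using hlt
  have hout : ∀ j, ∀ L ∈ Consistent 𝒞 S i,
      G (greedyRun G l j) ∈ L \ {a | a ∈ greedyRun G l j} := by
    intro j
    induction j using Nat.strong_induction_on with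
    | _ j ih =>
      intro L hL
      obtain ⟨L₀, hL₀⟩ := hScons
      refine generate_mem_diff_of_nodup hG hL.1 (h𝒞 L hL.1)
        (nodup_greedyRun hl fun k hk => (ih k hk L₀ hL₀).2) (by rw [length_greedyRun]; omega)
        ((encard_le_encard ?_).trans hL.2)
      rintro a ⟨ha, haL⟩
      rcases mem_greedyRun.1 ha with ha | ⟨k, hk, rfl⟩
      · exact ⟨hlS ▸ ha, haL⟩
      · exact absurd (ih k hk L hL).1 haL
  obtain ⟨L₀, hL₀⟩ := hScons
  refine infinite_of_injective_forall_mem (injective_greedyRun_output fun j => (hout j L₀ hL₀).2)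
    (fun j => ?_) hScl
  exact mem_noisyClosure_iff.2 ⟨⟨L₀, hL₀⟩, fun L hL => (hout j L hL).1⟩

theorem stmt10 {U : Type*} [Countable U] (𝒞 : Set (Set U))
    (h𝒞 : ∀ L ∈ 𝒞, L.Infinite) (i : ℕ) (hi : 1 ≤ i) :
    (∃ G : List U → U, UniformGen 𝒞 i G) ↔
    (∃ G : List U → U, UniformGen 𝒞 1 G) := by
  refine ⟨fun ⟨G, hG⟩ => ⟨G, hG.mono hi⟩, fun ⟨G, t0, hG⟩ => ?_⟩
  have : Nonempty U := ⟨G []⟩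
  have hNC₁ : NC 𝒞 1 ≠ ⊤ :=
    ne_top_of_le_ne_top (ENat.natCast_ne_top t0) (NC_le_of_uniformGen h𝒞 hG)
  exact exists_uniformGen_of_NC_ne_top (NC_ne_top_of_NC_one_ne_top hNC₁ i hi)
end
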